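/- arXiv:2408.01673 — 2 statements merged into one kernel-verified Lean document; each statement's English description precedes it below -/
import Mathlib

section
/- If an assignment x is rank-minimizing for a preference profile p, then x is not wasteful for p. -/
open Finset
open scoped Classical

variable {A O : Type*}

/-- A strict preference ranking: a bijection from object types to positions. -/
abbrev Pref (O : Type*) [Fintype O] := O ≃ Fin (Fintype.card O)

/-- The rank of object `o` under ranking `p` (1 = best). -/
def rk [Fintype O] (p : Pref O) (o : O) : ℕ := (p o : ℕ) + 1

/-- A (probabilistic) assignment. -/
def IsAssignment [Fintype A] [Fintype O] (q : O → ℕ) (x : A → O → ℝ) : Prop :=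
  (∀ a o, 0 ≤ x a o ∧ x a o ≤ 1) ∧ (∀ a, ∑ o, x a o = 1) ∧ (∀ o, ∑ a, x a o ≤ (q o : ℝ))

def IsDeterministic [Fintype A] [Fintype O] (x : A → O → ℝ) : Prop :=
  ∀ a o, x a o = 0 ∨ x a o = 1

/-- The rank value (sum of expected ranks). -/
def RV [Fintype A] [Fintype O] (p : A → Pref O) (x : A → O → ℝ) : ℝ :=
  ∑ a, ∑ o, (rk (p a) o : ℝ) * x a o

/-- `x` is a rank-minimizing assignment for profile `p`. -/
def RankMin [Fintype A] [Fintype O] (q : O → ℕ) (p : A → Pref O) (x : A → O → ℝ) : Prop :=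
  IsAssignment q x ∧ ∀ y, IsAssignment q y → RV p x ≤ RV p y

/-- `x` is wasteful for profile `p`. -/
def Wasteful [Fintype A] [Fintype O] (q : O → ℕ) (p : A → Pref O) (x : A → O → ℝ) : Prop :=
  ∃ o o' a, (∑ a', x a' o) < (q o : ℝ) ∧ 0 < x a o' ∧ rk (p a) o < rk (p a) o'

/-- `k̄(p_a)`: the minimal `k` such that the types ranked at or above `k` have
total capacity at least `|A|`. -/
noncomputable def kbar [Fintype O] (nA : ℕ) (q : O → ℕ) (p : Pref O) : ℕ :=
  sInf {k | nA ≤ ∑ o ∈ Finset.univ.filter (fun o => rk p o ≤ k), q o}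

/-- A deterministic assignment, viewed as a map from agents to objects, is feasible. -/
def DetOK [Fintype A] [Fintype O] (q : O → ℕ) (d : A → O) : Prop :=
  ∀ o, (Finset.univ.filter (fun a => d a = o)).card ≤ q o

/-- The 0-1 matrix of a deterministic assignment. -/
noncomputable def detMat [Fintype A] [Fintype O] (d : A → O) : A → O → ℝ :=
  fun a o => if d a = o then 1 else 0

/-- The set of deterministic rank-minimizing assignments for `p`
(minimizing over all probabilistic assignments). -/
noncomputable def Ystar [Fintype A] [Fintype O] (q : O → ℕ) (p : A → Pref O) :
    Finset (A → O) :=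
  Finset.univ.filter
    (fun d => DetOK q d ∧ ∀ x, IsAssignment q x → RV p (detMat d) ≤ RV p x)

/-- The uniform rank-minimizing mechanism. -/
noncomputable def fU [Fintype A] [Fintype O] (q : O → ℕ) (p : A → Pref O) : A → O → ℝ :=
  fun a o => (∑ d ∈ Ystar q p, detMat d a o) / (Ystar q p).card

/-- Agent `a` (with true ranking `r`) weakly prefers `x` to `x'`
(first-order stochastic dominance). -/
def WeakPrefAt [Fintype A] [Fintype O] (r : Pref O) (a : A) (x x' : A → O → ℝ) : Prop :=
  ∀ j : ℕ, ∑ o ∈ Finset.univ.filter (fun o => rk r o ≤ j), x' a o ≤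
           ∑ o ∈ Finset.univ.filter (fun o => rk r o ≤ j), x a o

/-- Agent `a` strictly prefers `x` to `x'`. -/
def StrictPrefAt [Fintype A] [Fintype O] (r : Pref O) (a : A) (x x' : A → O → ℝ) : Prop :=
  WeakPrefAt r a x x' ∧ ∃ j : ℕ, j < Fintype.card O ∧
    ∑ o ∈ Finset.univ.filter (fun o => rk r o ≤ j), x' a o <
    ∑ o ∈ Finset.univ.filter (fun o => rk r o ≤ j), x a o

/-- `d` is an outside option demotion strategy for true ranking `r`. -/
def ODS [Fintype O] (null : O) (r d : Pref O) : Prop :=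
  (∀ o, rk r o < rk r null → rk d o = rk r o) ∧ rk d null = Fintype.card O

/-- The refusal map `g`: each agent keeps probability on truly acceptable types
and moves all remaining mass to the null type. -/
noncomputable def refuse [Fintype A] [Fintype O] (null : O) (r : A → Pref O)
    (x : A → O → ℝ) : A → O → ℝ :=
  fun a o =>
    if rk (r a) o < rk (r a) null then x a o
    else if o = null then
      ∑ o' ∈ Finset.univ.filter (fun o' => rk (r a) null ≤ rk (r a) o'), x a o'
    else 0

/-- Equal treatment of equals for a mechanism. -/
def SatisfiesETE [Fintype A] [Fintype O] (q : O → ℕ)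
    (f : (A → Pref O) → A → O → ℝ) : Prop :=
  ∀ (p : A → Pref O) (a a' : A),
    (∀ o, rk (p a) o ≤ kbar (Fintype.card A) q (p a) → p a' o = p a o) →
    ∀ o, f p a o = f p a' o

/-- a rank-minimizing assignment is not wasteful. -/
theorem stmt3 [Fintype A] [Fintype O] (q : O → ℕ) (p : A → Pref O)
    (x : A → O → ℝ) (hx : RankMin q p x) : ¬ Wasteful q p x := by
  rintro ⟨o, o', a, hcap, hpos, hrk⟩
  obtain ⟨⟨hbound, hrow, hcol⟩, hmin⟩ := hx
  have hne : o ≠ o' := fun h => by simp [h] at hrk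
  set ε : ℝ := min (x a o') ((q o : ℝ) - ∑ a', x a' o) with hε
  have hεpos : 0 < ε := lt_min hpos (by linarith)
  have hεle : ε ≤ x a o' := min_le_left _ _
  have hεle2 : ε ≤ (q o : ℝ) - ∑ a', x a' o := min_le_right _ _
  set δ : O → ℝ := fun b => ε * ((if b = o then 1 else 0) - (if b = o' then 1 else 0))
    with hδ
  set y : A → O → ℝ := fun c b => x c b + (if c = a then δ b else 0) with hy
  have hδsum : ∑ b, δ b = 0 := by
    simp [hδ, Finset.mul_sum, mul_sub, Finset.sum_sub_distrib]
  have hδval : ∀ b, δ b = if b = o then ε else if b = o' then -ε else 0 := by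
    intro b
    by_cases h1 : b = o
    · subst h1; simp [hδ, hne]
    · by_cases h2 : b = o'
      · subst h2; simp [hδ, h1]
      · simp [hδ, h1, h2]
  have hxle : x a o + x a o' ≤ 1 := by
    have h1 : ∑ b ∈ ({o, o'} : Finset O), x a b ≤ ∑ b, x a b :=
      Finset.sum_le_sum_of_subset_of_nonneg (Finset.subset_univ _)
        (fun i _ _ => (hbound a i).1)
    rw [Finset.sum_pair hne, hrow a] at h1
    exact h1
  have hcolδ : ∀ b, ∑ c, (if c = a then δ b else 0) = δ b := by
    intro b; rw [Finset.sum_ite_eq']; simp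
  have hyass : IsAssignment q y := by
    refine ⟨fun c b => ?_, fun c => ?_, fun b => ?_⟩
    · simp only [hy]
      by_cases hc : c = a
      · subst hc
        rw [hδval b, if_pos rfl]
        by_cases h1 : b = o
        · subst h1
          rw [if_pos rfl]
          exact ⟨by nlinarith [(hbound c b).1], by nlinarith⟩
        · rw [if_neg h1]
          by_cases h2 : b = o'
          · subst h2
            rw [if_pos rfl]
            exact ⟨by nlinarith, by nlinarith [(hbound c b).2]⟩
          · rw [if_neg h2]
            have := hbound c b
            exact ⟨by linarith [this.1], by linarith [this.2]⟩
      · rw [if_neg hc]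
        have := hbound c b
        exact ⟨by linarith [this.1], by linarith [this.2]⟩
    · simp only [hy, Finset.sum_add_distrib, hrow c]
      by_cases hc : c = a
      · simp [hc, hδsum]
      · simp [hc]
    · simp only [hy, Finset.sum_add_distrib]
      rw [hcolδ b, hδval b]
      by_cases h1 : b = o
      · subst h1; rw [if_pos rfl]; linarith
      · rw [if_neg h1]
        by_cases h2 : b = o'
        · subst h2; rw [if_pos rfl]; linarith [hcol b]
        · rw [if_neg h2]; simpa using hcol b
  have hRV : RV p y < RV p x := by
    have hterm : ∀ b : O, (rk (p a) b : ℝ) * δ b =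
        (if b = o then ε * (rk (p a) b : ℝ) else 0) -
        (if b = o' then ε * (rk (p a) b : ℝ) else 0) := by
      intro b; simp only [hδ]; split_ifs <;> ring
    have hδrk : ∑ b, (rk (p a) b : ℝ) * δ b =
        ε * ((rk (p a) o : ℝ) - (rk (p a) o' : ℝ)) := by
      rw [Finset.sum_congr rfl (fun b _ => hterm b), Finset.sum_sub_distrib,
        Finset.sum_ite_eq', Finset.sum_ite_eq']
      simp; ring
    have hexp : RV p y = RV p x + ε * ((rk (p a) o : ℝ) - (rk (p a) o' : ℝ)) := by
      simp only [RV, hy, mul_add, Finset.sum_add_distrib]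
      congr 1
      rw [Finset.sum_eq_single a]
      · simpa using hδrk
      · intro c _ hc; simp [hc]
      · simp
    rw [hexp]
    have : (rk (p a) o : ℝ) < (rk (p a) o' : ℝ) := by exact_mod_cast hrk
    nlinarith
  exact absurd (hmin y hyass) (not_le.mpr hRV)
end

section
/- Fix an agent a with true preference r_a and an outside option demotion strategy d_a. If y is a deterministic rank-minimizing assignment for (r_a, p_{-a}) with y_{ao} = 1 for some o with R(o, r_a) < R(∅, r_a) (i.e., a receives a truly acceptable type), then y is also a deterministic rank-minimizing assignment for (d_a, p_{-a}). -/
open Finset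
open scoped Classical

variable {A O : Type*}

/-
Let `y` be any feasible assignment. Replace `a`'s row of `y` by its refusal: mass on types that
are unacceptable under `r_a` is moved to `∅`; since `q_∅ ≥ |A|` this is still feasible. Under
`r_a` every moved unit then costs `R(∅, r_a)`, which is at most its cost `R(o, d_a)` under `d_a`,
because `d_a` ranks only the truly acceptable types above `R(∅, r_a)`. Hence the refused
assignment is no more expensive under `(r_a, p_{-a})` than `y` under `(d_a, p_{-a})`, while the
cost of the given `d` is the same under both profiles, as `a` gets an acceptable type.
-/

section Ranking

variable [Fintype O]

lemma rk_injective (p : Pref O) : Function.Injective (rk p) := fun _ _ h =>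
  p.injective (Fin.ext (Nat.succ_injective h))

lemma ODS.rk_null_le {null : O} {r d : Pref O} (hods : ODS null r d) {o : O}
    (ho : rk r null ≤ rk r o) : rk r null ≤ rk d o := by
  by_contra! hlt
  -- `o'` is the type that `r` puts where `d` puts `o`; it is acceptable, so `d` agrees with `r` on it.
  set o' := r.symm (d o)
  have ho' : rk r o' = rk d o := by simp [o', rk]
  have hacc : rk r o' < rk r null := ho' ▸ hlt
  have : o' = o := rk_injective d ((hods.1 o' hacc).trans ho')
  exact absurd (this ▸ hacc) (not_lt.mpr ho)

end Ranking

section Refusal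

variable [Fintype A] [Fintype O] {null : O} {r : A → Pref O} {x : A → O → ℝ} {a : A}

lemma sum_mul_refuse (w : O → ℝ) :
    ∑ o, w o * refuse null r x a o =
      ∑ o, (if rk (r a) o < rk (r a) null then w o else w null) * x a o := by
  have hnull : (Finset.univ.filter fun o => rk (r a) null ≤ rk (r a) o ∧ o = null) = {null} := by
    ext; constructor <;> simp +contextual
  simp only [refuse, mul_ite, mul_zero, ite_mul, Finset.sum_ite, Finset.sum_const_zero, add_zero,
    Finset.filter_filter, not_lt, hnull, Finset.sum_singleton, Finset.mul_sum]

lemma sum_refuse : ∑ o, refuse null r x a o = ∑ o, x a o := by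
  simpa using sum_mul_refuse (null := null) (r := r) (x := x) (a := a) (fun _ => 1)

lemma refuse_nonneg (hx : ∀ o, 0 ≤ x a o) (o : O) : 0 ≤ refuse null r x a o := by
  unfold refuse
  split_ifs
  exacts [hx o, Finset.sum_nonneg fun o' _ => hx o', le_rfl]

lemma refuse_le_of_ne_null (hx : ∀ o, 0 ≤ x a o) {o : O} (ho : o ≠ null) :
    refuse null r x a o ≤ x a o := by
  unfold refuse
  split_ifs
  exacts [le_rfl, hx o]

lemma refuse_le_one (hx : ∀ o, 0 ≤ x a o) (hx_sum : ∑ o, x a o = 1) (o : O) :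
    refuse null r x a o ≤ 1 :=
  calc refuse null r x a o ≤ ∑ o, refuse null r x a o :=
        Finset.single_le_sum (fun o _ => refuse_nonneg hx o) (Finset.mem_univ o)
    _ = 1 := sum_refuse.trans hx_sum

lemma sum_rk_mul_refuse_le {d : Pref O} (hods : ODS null (r a) d) (hx : ∀ o, 0 ≤ x a o) :
    ∑ o, (rk (r a) o : ℝ) * refuse null r x a o ≤ ∑ o, (rk d o : ℝ) * x a o := by
  rw [sum_mul_refuse]
  refine Finset.sum_le_sum fun o _ => mul_le_mul_of_nonneg_right ?_ (hx o)
  split_ifs with hacc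
  · exact_mod_cast (hods.1 o hacc).ge
  · exact_mod_cast hods.rk_null_le (not_lt.mp hacc)

end Refusal

section Assignment

variable [Fintype A] [Fintype O] [DecidableEq A]

lemma IsAssignment.update {q : O → ℕ} {x : A → O → ℝ} (hx : IsAssignment q x) {null : O}
    (hnull : Fintype.card A ≤ q null) (a : A) {z : O → ℝ} (hz : ∀ o, 0 ≤ z o ∧ z o ≤ 1)
    (hz_sum : ∑ o, z o = 1) (hz_le : ∀ o ≠ null, z o ≤ x a o) :
    IsAssignment q (Function.update x a z) := by
  obtain ⟨hbd, hrow, hcol⟩ := hx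
  have hbd' : ∀ a' o, 0 ≤ Function.update x a z a' o ∧ Function.update x a z a' o ≤ 1 := by
    intro a' o
    rcases eq_or_ne a' a with rfl | h
    · simpa using hz o
    · simpa [h] using hbd a' o
  refine ⟨hbd', fun a' => ?_, fun o => ?_⟩
  · rcases eq_or_ne a' a with rfl | h
    · simpa using hz_sum
    · simpa [h] using hrow a'
  · rcases eq_or_ne o null with rfl | ho
    · calc ∑ a', Function.update x a z a' o ≤ ∑ _a' : A, (1 : ℝ) :=
            Finset.sum_le_sum fun a' _ => (hbd' a' o).2
        _ ≤ q o := by simpa using hnull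
    · refine le_trans (Finset.sum_le_sum fun a' _ => ?_) (hcol o)
      rcases eq_or_ne a' a with rfl | h
      · simpa using hz_le o ho
      · simp [h]

lemma RV_le_RV_of_eq_of_ne {p p' : A → Pref O} {x x' : A → O → ℝ} (a : A)
    (hp : ∀ a' ≠ a, p a' = p' a') (hx : ∀ a' ≠ a, x a' = x' a')
    (ha : ∑ o, (rk (p a) o : ℝ) * x a o ≤ ∑ o, (rk (p' a) o : ℝ) * x' a o) :
    RV p x ≤ RV p' x' := by
  unfold RV
  rw [← Finset.add_sum_erase _ _ (Finset.mem_univ a),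
    ← Finset.add_sum_erase _ (fun a' => ∑ o, (rk (p' a') o : ℝ) * x' a' o) (Finset.mem_univ a)]
  refine add_le_add ha (le_of_eq (Finset.sum_congr rfl fun a' ha' => ?_))
  have h := (Finset.mem_erase.mp ha').1
  rw [hp a' h, hx a' h]

lemma IsAssignment.update_refuse {q : O → ℕ} {x : A → O → ℝ} (hx : IsAssignment q x) {null : O}
    (hnull : Fintype.card A ≤ q null) (r : A → Pref O) (a : A) :
    IsAssignment q (Function.update x a (refuse null r x a)) :=
  have hx0 : ∀ o, 0 ≤ x a o := fun o => (hx.1 a o).1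
  hx.update hnull a (fun o => ⟨refuse_nonneg hx0 o, refuse_le_one hx0 (hx.2.1 a) o⟩)
    (sum_refuse.trans (hx.2.1 a)) (fun _ ho => refuse_le_of_ne_null hx0 ho)

end Assignment

lemma sum_mul_detMat [Fintype A] [Fintype O] (d : A → O) (a : A) (c : O → ℝ) :
    ∑ o, c o * detMat d a o = c (d a) := by
  simp [detMat]

/-- Claim 1: a deterministic rank-minimizing assignment for the truthful
profile that gives `a` a truly acceptable type is also rank-minimizing for the profile
where `a` reveals an ODS. -/
theorem stmt10 [Fintype A] [Fintype O] [DecidableEq A]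
    (q : O → ℕ) (null : O) (hnull : Fintype.card A ≤ q null)
    (a : A) (ra da : Pref O) (hods : ODS null ra da)
    (p : A → Pref O) (d : A → O)
    (hd : d ∈ Ystar q (Function.update p a ra))
    (o : O) (hdo : d a = o) (hacc : rk ra o < rk ra null) :
    d ∈ Ystar q (Function.update p a da) := by
  simp only [Ystar, Finset.mem_filter, Finset.mem_univ, true_and] at hd ⊢
  obtain ⟨hfeas, hmin⟩ := hd
  refine ⟨hfeas, fun y hy => ?_⟩
  set P := Function.update p a ra
  set P' := Function.update p a da
  have hPP' : ∀ a' ≠ a, P a' = P' a' := fun a' h => by simp [P, P', h]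
  have hods' : ODS null (P a) da := by simpa [P] using hods
  have hrow : ∑ o, (rk (P a) o : ℝ) * refuse null P y a o ≤ ∑ o, (rk (P' a) o : ℝ) * y a o := by
    simpa [P'] using sum_rk_mul_refuse_le hods' fun o => (hy.1 a o).1
  calc RV P' (detMat d) ≤ RV P (detMat d) :=
        RV_le_RV_of_eq_of_ne a (fun a' h => (hPP' a' h).symm) (fun _ _ => rfl)
          (by simp [sum_mul_detMat, hdo, P, P', hods.1 o hacc])
    _ ≤ RV P (Function.update y a (refuse null P y a)) := hmin _ (hy.update_refuse hnull P a)
    _ ≤ RV P' y := RV_le_RV_of_eq_of_ne a hPP' (fun a' h => by simp [h]) (by simpa using hrow)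
end
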